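/- Let X be a real vector space, let τ_0 be the weak topology on X induced by the algebraic dual X' (the coarsest topology making every linear functional on X continuous), and let τ_c be the core convex topology. Then X is finite-dimensional if and only if τ_0 = τ_c. -/

import Mathlib

/-!
Preimages under linear maps of convex open subsets of locally convex spaces (open halfspaces in
particular) are convex and algebraically open, so `τ_c` is finer than `τ₀`.

In finite dimension, a convex algebraically open set `A` is absorbent around each of its points
`x`; the gauge of `A - x` is then a finite convex function, hence continuous, so `A` is open for
the Euclidean topology, which is `τ₀`.

In infinite dimension, every `τ₀`-neighbourhood of `0` contains the common kernel of finitely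
many functionals, hence a line. A Hamel basis embeds `X` linearly into `ℓ^∞`, and the preimage
of the unit ball is a `τ_c`-open neighbourhood of `0` containing no line.
-/

open Pointwise

/-- Algebraic interior (core) of a set `A` in a real vector space:
`cor A = {x ∈ A | ∀ d, ∃ δ > 0, ∀ λ ∈ [0, δ], x + λ • d ∈ A}`. -/
def cor {X : Type*} [AddCommGroup X] [Module ℝ X] (A : Set X) : Set X :=
  {x | x ∈ A ∧ ∀ d : X, ∃ δ : ℝ, 0 < δ ∧ ∀ lam ∈ Set.Icc (0 : ℝ) δ, x + lam • d ∈ A}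

/-- Relative algebraic interior of `A`: directions are taken in `L(A) = span (A - A)`. -/
def icr {X : Type*} [AddCommGroup X] [Module ℝ X] (A : Set X) : Set X :=
  {x | x ∈ A ∧ ∀ d ∈ Submodule.span ℝ (A - A),
    ∃ δ : ℝ, 0 < δ ∧ ∀ lam ∈ Set.Icc (0 : ℝ) δ, x + lam • d ∈ A}

/-- Vectorial closure of `A`:
`vcl A = {b | ∃ d, ∀ δ > 0, ∃ λ ∈ [0, δ], b + λ • d ∈ A}`. -/
def vcl {X : Type*} [AddCommGroup X] [Module ℝ X] (A : Set X) : Set X :=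
  {b | ∃ d : X, ∀ δ : ℝ, 0 < δ → ∃ lam ∈ Set.Icc (0 : ℝ) δ, b + lam • d ∈ A}

/-- The core convex topology `τ_c`: the topology whose open sets are the unions of
members of `𝔅 = {A | A convex and cor A = A}`; since `𝔅` is a topological basis
(closed under binary intersection, contains `X` and `∅`), this is the topology
generated by `𝔅`. -/
def tauc (X : Type*) [AddCommGroup X] [Module ℝ X] : TopologicalSpace X :=
  TopologicalSpace.generateFrom {A : Set X | Convex ℝ A ∧ cor A = A}

/-- The weak topology `τ₀` on `X` induced by the algebraic dual: the coarsest topology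
making every linear functional `X → ℝ` continuous. -/
def tau0 (X : Type*) [AddCommGroup X] [Module ℝ X] : TopologicalSpace X :=
  ⨅ f : X →ₗ[ℝ] ℝ, TopologicalSpace.induced f inferInstance

open Set Filter Topology
open scoped ENNReal

section Core

variable {X Y : Type*} [AddCommGroup X] [Module ℝ X] [AddCommGroup Y] [Module ℝ Y]
  {A : Set X} {x : X}

theorem cor_subset (A : Set X) : cor A ⊆ A := fun _ hx ↦ hx.1

theorem mem_cor_iff : x ∈ cor A ↔ x ∈ A ∧ ∀ d : X, ∀ᶠ t in 𝓝[≥] (0 : ℝ), x + t • d ∈ A :=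
  Iff.rfl.and (forall_congr' fun _ ↦ mem_nhdsGE_iff_exists_Icc_subset.symm)

theorem preimage_cor_subset_cor_preimage (f : X →ₗ[ℝ] Y) (B : Set Y) :
    f ⁻¹' cor B ⊆ cor (f ⁻¹' B) := by
  intro x hx
  refine mem_cor_iff.2 ⟨(mem_cor_iff.1 hx).1, fun d ↦ ?_⟩
  filter_upwards [(mem_cor_iff.1 hx).2 (f d)] with t ht
  simpa using ht

theorem cor_preimage_eq {B : Set Y} (hB : cor B = B) (f : X →ₗ[ℝ] Y) :
    cor (f ⁻¹' B) = f ⁻¹' B :=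
  (cor_subset _).antisymm <| by simpa only [hB] using preimage_cor_subset_cor_preimage f B

theorem IsOpen.cor_eq [TopologicalSpace X] [ContinuousAdd X] [ContinuousSMul ℝ X]
    (hA : IsOpen A) : cor A = A := by
  refine (cor_subset A).antisymm fun x hx ↦ mem_cor_iff.2 ⟨hx, fun d ↦ ?_⟩
  have hcont : Continuous fun t : ℝ ↦ x + t • d := by fun_prop
  exact nhdsWithin_le_nhds (hcont.continuousAt.preimage_mem_nhds (by simpa using hA.mem_nhds hx))

theorem absorbent_preimage_add_of_mem_cor (hx : x ∈ cor A) :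
    Absorbent ℝ ((x + ·) ⁻¹' A) := by
  refine absorbent_iff_eventually_nhdsNE_zero.2 fun y ↦ nhdsWithin_le_nhds ?_
  obtain ⟨δ₁, hδ₁, h₁⟩ := hx.2 y
  obtain ⟨δ₂, hδ₂, h₂⟩ := hx.2 (-y)
  filter_upwards [Ioo_mem_nhds (neg_neg_of_pos hδ₂) hδ₁] with c hc
  rcases le_total 0 c with hc0 | hc0
  · exact h₁ c ⟨hc0, hc.2.le⟩
  · simpa using h₂ (-c) ⟨neg_nonneg.2 hc0, by linarith [hc.1]⟩

end Core

theorem convexOn_gauge {E : Type*} [AddCommGroup E] [Module ℝ E] {s : Set E}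
    (hs : Convex ℝ s) (habs : Absorbent ℝ s) : ConvexOn ℝ univ (gauge s) := by
  refine ⟨convex_univ, fun x _ y _ a b ha hb _ ↦ ?_⟩
  calc gauge s (a • x + b • y) ≤ gauge s (a • x) + gauge s (b • y) := gauge_add_le hs habs _ _
    _ = a • gauge s x + b • gauge s y := by
      rw [gauge_smul_of_nonneg ha, gauge_smul_of_nonneg hb]

theorem Convex.isOpen_of_cor_eq {E : Type*} [NormedAddCommGroup E] [NormedSpace ℝ E]
    [FiniteDimensional ℝ E] {A : Set E} (hA : Convex ℝ A) (hcor : cor A = A) : IsOpen A := by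
  refine isOpen_iff_mem_nhds.2 fun x hx ↦ ?_
  set s := (x + ·) ⁻¹' A
  have hs : Convex ℝ s := hA.translate_preimage_right x
  have hs₀ : (0 : E) ∈ s := by simpa [s] using hx
  have habs : Absorbent ℝ s := absorbent_preimage_add_of_mem_cor (hcor.symm ▸ hx)
  have hgauge : Continuous (gauge s) := (convexOn_gauge hs habs).locallyLipschitz.continuous
  have hopen : IsOpen {y | gauge s (y - x) < 1} :=
    isOpen_lt (hgauge.comp (continuous_sub_right x)) continuous_const
  refine mem_of_superset (hopen.mem_nhds (by simp)) fun y hy ↦ ?_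
  simpa [s] using setOfPred_gauge_lt_one_subset_self hs hs₀ habs hy

section Topologies

variable {X : Type*} [AddCommGroup X] [Module ℝ X]

theorem isOpen_tauc_of_convex_of_cor_eq {A : Set X} (hA : Convex ℝ A) (hcor : cor A = A) :
    IsOpen[tauc X] A :=
  TopologicalSpace.isOpen_generateFrom_of_mem ⟨hA, hcor⟩

theorem continuous_tau0 (f : X →ₗ[ℝ] ℝ) : Continuous[tau0 X, inferInstance] f :=
  continuous_iff_le_induced.2 (iInf_le _ f)

theorem continuous_tauc {Y : Type*} [AddCommGroup Y] [Module ℝ Y] [TopologicalSpace Y]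
    [IsTopologicalAddGroup Y] [ContinuousSMul ℝ Y] [LocallyConvexSpace ℝ Y] (T : X →ₗ[ℝ] Y) :
    Continuous[tauc X, inferInstance] T := by
  let := tauc X
  refine continuous_def.2 fun U hU ↦ isOpen_iff_forall_mem_open.2 fun x hx ↦ ?_
  obtain ⟨S, ⟨hS, hSconv⟩, hSU⟩ :=
    (LocallyConvexSpace.convex_basis (𝕜 := ℝ) (T x)).mem_iff.1 (hU.mem_nhds hx)
  refine ⟨T ⁻¹' interior S, preimage_mono (interior_subset.trans hSU), ?_,
    mem_interior_iff_mem_nhds.2 hS⟩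
  exact isOpen_tauc_of_convex_of_cor_eq (hSconv.interior.linear_preimage T)
    (cor_preimage_eq isOpen_interior.cor_eq T)

theorem tauc_le_tau0 : tauc X ≤ tau0 X :=
  le_iInf fun f ↦ continuous_iff_le_induced.1 (continuous_tauc f)

theorem tau0_le_tauc [FiniteDimensional ℝ X] : tau0 X ≤ tauc X := by
  let := tau0 X
  let e := (Module.finBasis ℝ X).equivFun
  have he : Continuous e :=
    continuous_pi fun i ↦ continuous_tau0 (LinearMap.proj i ∘ₗ e.toLinearMap)
  refine le_generateFrom fun A ⟨hA, hcor⟩ ↦ ?_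
  have hopen : IsOpen (e ⁻¹' (e.symm ⁻¹' A)) :=
    ((hA.linear_preimage e.symm.toLinearMap).isOpen_of_cor_eq (cor_preimage_eq hcor _)).preimage he
  exact e.toEquiv.preimage_symm_preimage A ▸ hopen

theorem exists_ne_zero_forall_smul_mem_of_mem_nhds_tau0 (hX : ¬ FiniteDimensional ℝ X) {U : Set X}
    (hU : U ∈ @nhds X (tau0 X) 0) : ∃ v ≠ 0, ∀ t : ℝ, t • v ∈ U := by
  rw [tau0, nhds_iInf, mem_iInf] at hU
  obtain ⟨I, hI, V, hV, rfl⟩ := hU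
  have := hI.fintype
  let φ : X →ₗ[ℝ] (I → ℝ) := LinearMap.pi fun f ↦ f.1
  have hker : LinearMap.ker φ ≠ ⊥ := fun hker ↦
    hX (Module.Finite.of_injective φ (LinearMap.ker_eq_bot.1 hker))
  obtain ⟨v, hv, hv0⟩ := Submodule.exists_mem_ne_zero_of_ne_bot hker
  refine ⟨v, hv0, fun t ↦ mem_iInter.2 fun f ↦ ?_⟩
  have hVf := hV f
  rw [nhds_induced] at hVf
  obtain ⟨W, hW, hWV⟩ := mem_comap.1 hVf
  have hfv : f.1 v = 0 := congrFun hv f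
  exact hWV (by simpa [hfv] using mem_of_mem_nhds hW)

theorem exists_injective_linearMap_lp :
    ∃ T : X →ₗ[ℝ] lp (fun _ : Module.Basis.ofVectorSpaceIndex ℝ X ↦ ℝ) ∞,
      Function.Injective T := by
  let b := Module.Basis.ofVectorSpace ℝ X
  refine ⟨lp.linearMapOfLE ℝ _ le_top ∘ₗ (b.repr.trans lp.zeroBasis.repr.symm).toLinearMap,
    ?_⟩
  rw [LinearMap.coe_comp]
  refine Function.Injective.comp (fun f g hfg ↦ lp.ext ?_) (LinearEquiv.injective _)
  simpa using congrArg (⇑) hfg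

theorem finiteDimensional_of_tau0_le_tauc (h : tau0 X ≤ tauc X) : FiniteDimensional ℝ X := by
  by_contra hfin
  let := tau0 X
  obtain ⟨T, hT⟩ := exists_injective_linearMap_lp (X := X)
  have hball : T ⁻¹' Metric.ball 0 1 ∈ 𝓝 0 :=
    (continuous_le_dom h (continuous_tauc T)).continuousAt.preimage_mem_nhds
      (by simpa using Metric.ball_mem_nhds 0 one_pos)
  obtain ⟨v, hv, hsmul⟩ := exists_ne_zero_forall_smul_mem_of_mem_nhds_tau0 hfin hball
  have hTv : 0 < ‖T v‖ := norm_pos_iff.2 ((map_ne_zero_iff T hT).2 hv)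
  have := hsmul ‖T v‖⁻¹
  simp [norm_smul, hTv.ne'] at this

end Topologies

/-- `X` is finite-dimensional iff the weak topology induced by the
algebraic dual coincides with the core convex topology. -/
theorem stmt11 (X : Type*) [AddCommGroup X] [Module ℝ X] :
    FiniteDimensional ℝ X ↔ tau0 X = tauc X :=
  ⟨fun _ ↦ tau0_le_tauc.antisymm tauc_le_tau0, fun h ↦ finiteDimensional_of_tau0_le_tauc h.le⟩
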